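/- Let U ⊆ ℕ* be a spread, i.e. an inhabited decidable subset closed under prefixes such that every element has a one-step extension in U. Define a ◁_U V iff a ◁_B (¬U ∪ V), where ¬U is the complement of U. Then ◁_U is a cover: it satisfies reflexivity, transitivity, and ↓-right (a ◁_U V and a ◁_U W imply a ◁_U V↓W, with ↓ computed in the Baire order). -/

import Mathlib

/-- The formal Baire cover, generated by η, ζ, ϝ. -/
inductive BCov : List ℕ → Set (List ℕ) → Prop
  | eta {a : List ℕ} {U : Set (List ℕ)} : a ∈ U → BCov a U
  | zeta {a b : List ℕ} {U : Set (List ℕ)} : b <+: a → BCov b U → BCov a U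
  | digamma {a : List ℕ} {U : Set (List ℕ)} : (∀ n : ℕ, BCov (a ++ [n]) U) → BCov a U


/-- `U ↓ V`: common refinements (in the reverse prefix order). -/
def Down (U V : Set (List ℕ)) : Set (List ℕ) :=
  {c : List ℕ | ∃ a ∈ U, ∃ b ∈ V, a <+: c ∧ b <+: c}

/-!
All three laws reduce to the corresponding laws of the Baire cover `◁_B`. Reflexivity and
transitivity are immediate. For ↓-right, the Baire cover satisfies `a ◁ V → a ◁ W → a ◁ V ↓ W`
(by induction on `a ◁ V`, after strengthening the statement to all extensions of `a`), and since
`U` is closed under prefixes, `¬U` is closed under extensions, so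
`(¬U ∪ V) ↓ (¬U ∪ W) ⊆ ¬U ∪ V ↓ W`.
-/

theorem List.IsPrefix.eq_or_append_singleton_prefix {α : Type*} {b a : List α} (h : b <+: a) :
    a = b ∨ ∃ n, b ++ [n] <+: a := by
  obtain ⟨t, rfl⟩ := h
  cases t with
  | nil => exact .inl (List.append_nil b)
  | cons n t => exact .inr ⟨n, t, by simp⟩

theorem Down.subset_of_prefix {a b : List ℕ} {V W : Set (List ℕ)} (hb : b ∈ V) (hba : b <+: a) :
    Down {a} W ⊆ Down V W := by
  rintro c ⟨_, rfl, q, hq, hac, hqc⟩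
  exact ⟨b, hb, q, hq, hba.trans hac, hqc⟩

theorem Down.compl_union_subset {U : Set (List ℕ)}
    (hpre : ∀ a b : List ℕ, a ∈ U → b <+: a → b ∈ U) (V W : Set (List ℕ)) : Down (Uᶜ ∪ V) (Uᶜ ∪ W) ⊆ Uᶜ ∪ Down V W := by
  rintro c ⟨p, hp, q, hq, hpc, hqc⟩
  by_cases hc : c ∈ U
  · exact .inr ⟨p, hp.resolve_left (· (hpre c p hc hpc)), q,
      hq.resolve_left (· (hpre c q hc hqc)), hpc, hqc⟩
  · exact .inl hc

namespace BCov

variable {a : List ℕ} {V W : Set (List ℕ)}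

theorem mono (h : BCov a V) (hVW : V ⊆ W) : BCov a W := by
  induction h with
  | eta h => exact .eta (hVW h)
  | zeta hb _ ih => exact .zeta hb (ih hVW)
  | digamma _ ih => exact .digamma fun n => ih n hVW

theorem trans (h : BCov a V) (hVW : ∀ b ∈ V, BCov b W) : BCov a W := by
  induction h with
  | eta h => exact hVW _ h
  | zeta hb _ ih => exact .zeta hb (ih hVW)
  | digamma _ ih => exact .digamma fun n => ih n hVW

theorem down_singleton_of_prefix {b : List ℕ} (h : BCov b W) (hba : b <+: a) :
    BCov a (Down {a} W) := by
  induction h generalizing a with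
  | @eta b _ h => exact .eta ⟨a, rfl, b, h, List.prefix_refl a, hba⟩
  | zeta hb _ ih => exact ih (hb.trans hba)
  | @digamma b _ _ ih =>
    rcases hba.eq_or_append_singleton_prefix with rfl | ⟨n, hna⟩
    · exact .digamma fun n => (ih n (List.prefix_refl _)).mono
        (Down.subset_of_prefix rfl (List.prefix_append _ _))
    · exact ih n hna

theorem down_of_prefix {b : List ℕ} (hV : BCov b V) (hba : b <+: a) (hW : BCov a W) :
    BCov a (Down V W) := by
  induction hV generalizing a with
  | @eta b _ h =>
    exact (hW.down_singleton_of_prefix (List.prefix_refl a)).mono (Down.subset_of_prefix h hba)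
  | zeta hb _ ih => exact ih (hb.trans hba) hW
  | @digamma b _ _ ih =>
    rcases hba.eq_or_append_singleton_prefix with rfl | ⟨n, hna⟩
    · exact .digamma fun n => ih n (List.prefix_refl _) (.zeta (List.prefix_append _ _) hW)
    · exact ih n hna hW

theorem down (hV : BCov a V) (hW : BCov a W) : BCov a (Down V W) :=
  hV.down_of_prefix (List.prefix_refl a) hW

end BCov

theorem spread_cover_general (U : Set (List ℕ))
    (hpre : ∀ a b : List ℕ, a ∈ U → b <+: a → b ∈ U) :
    (∀ (a : List ℕ) (V : Set (List ℕ)), a ∈ V → BCov a (Uᶜ ∪ V)) ∧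
    (∀ (a : List ℕ) (V W : Set (List ℕ)), BCov a (Uᶜ ∪ V) →
      (∀ b ∈ V, BCov b (Uᶜ ∪ W)) → BCov a (Uᶜ ∪ W)) ∧
    (∀ (a : List ℕ) (V W : Set (List ℕ)), BCov a (Uᶜ ∪ V) → BCov a (Uᶜ ∪ W) →
      BCov a (Uᶜ ∪ Down V W)) := by
  refine ⟨fun a V ha => .eta (.inr ha), ?_, ?_⟩
  · intro a V W h hVW
    refine h.trans ?_
    rintro b (hb | hb)
    · exact .eta (.inl hb)
    · exact hVW b hb
  · intro a V W hV hW
    exact (hV.down hW).mono (Down.compl_union_subset hpre V W)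

/-- For a spread `U`, the relativised relation `a ◁_U V ≡ a ◁_B (¬U ∪ V)` is a
cover: it satisfies reflexivity, transitivity and ↓-right. -/
theorem spread_cover (U : Set (List ℕ))
    (hdec : ∀ a : List ℕ, a ∈ U ∨ a ∉ U)
    (hne : U.Nonempty)
    (hpre : ∀ a b : List ℕ, a ∈ U → b <+: a → b ∈ U)
    (hext : ∀ a ∈ U, ∃ n : ℕ, a ++ [n] ∈ U) :
    (∀ (a : List ℕ) (V : Set (List ℕ)), a ∈ V → BCov a (Uᶜ ∪ V)) ∧
    (∀ (a : List ℕ) (V W : Set (List ℕ)), BCov a (Uᶜ ∪ V) →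
      (∀ b ∈ V, BCov b (Uᶜ ∪ W)) → BCov a (Uᶜ ∪ W)) ∧
    (∀ (a : List ℕ) (V W : Set (List ℕ)), BCov a (Uᶜ ∪ V) → BCov a (Uᶜ ∪ W) →
      BCov a (Uᶜ ∪ Down V W)) :=
  spread_cover_general U hpre
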